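/- arXiv:1302.5204 — 2 statements merged into one kernel-verified Lean document; each statement's English description precedes it below -/
import Mathlib

section
/- Let (W,S) be a Coxeter system with Hecke algebra H over A = ℤ[q,q⁻¹], and let the bar involution on H be the ring involution sending q to q⁻¹ and T_w to (T_{w⁻¹})⁻¹ (extended semilinearly). If h ∈ H lies in H_{<0} := ⊕_w q⁻¹ℤ[q⁻¹] T_w and satisfies bar(h) = h, then h = 0. -/
open LaurentPolynomial in
/-- The element `ξ_s = q^{L(s)} - q^{-L(s)}` of `ℤ[q,q⁻¹]`. -/
noncomputable def heckeXi (Ls : ℕ) : LaurentPolynomial ℤ :=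
  LaurentPolynomial.T (Ls : ℤ) - LaurentPolynomial.T (-(Ls : ℤ))

/-- The Iwahori–Hecke algebra of a Coxeter system `cs` with weight function `L`,
presented as an algebra `H` over `A = ℤ[q,q⁻¹]` with a distinguished `A`-basis
`T` indexed by the group, `T 1 = 1`, and the standard multiplication rules
`T_s T_w = T_{sw}` if `ℓ(sw) > ℓ(w)` and
`T_s T_w = T_{sw} + (q^{L(s)} - q^{-L(s)}) T_w` if `ℓ(sw) < ℓ(w)`. -/
structure HeckeAlgebra {B W : Type*} [Group W] {M : CoxeterMatrix B}
    (cs : CoxeterSystem M W) (L : W → ℕ)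
    (H : Type*) [Ring H] [Algebra (LaurentPolynomial ℤ) H] where
  T : Module.Basis W (LaurentPolynomial ℤ) H
  T_one : T 1 = 1
  T_mul_gt : ∀ (i : B) (w : W), cs.length w < cs.length (cs.simple i * w) →
    T (cs.simple i) * T w = T (cs.simple i * w)
  T_mul_lt : ∀ (i : B) (w : W), cs.length (cs.simple i * w) < cs.length w →
    T (cs.simple i) * T w = T (cs.simple i * w) + heckeXi (L (cs.simple i)) • T w

/-- The `A`-submodule `H_{<0} = ⊕_{w ∈ W} q⁻¹ℤ[q⁻¹] T_w`, realised as the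
`ℤ`-span of the elements `q^n T_w` with `n < 0`. -/
def HeckeAlgebra.Hlt {B W : Type*} [Group W] {M : CoxeterMatrix B}
    {cs : CoxeterSystem M W} {L : W → ℕ}
    {H : Type*} [Ring H] [Algebra (LaurentPolynomial ℤ) H]
    (hk : HeckeAlgebra cs L H) : Submodule ℤ H :=
  Submodule.span ℤ
    {x | ∃ (w : W) (n : ℤ), n < 0 ∧
      x = (LaurentPolynomial.T n : LaurentPolynomial ℤ) • hk.T w}

/-- The bar involution of the Iwahori–Hecke algebra: the ring involution with
`bar q = q⁻¹` and `bar (T_w) = (T_{w⁻¹})⁻¹`, extended semilinearly with respect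
to the involution `q ↦ q⁻¹` of `ℤ[q,q⁻¹]`. -/
structure HeckeBar {B W : Type*} [Group W] {M : CoxeterMatrix B}
    {cs : CoxeterSystem M W} {L : W → ℕ}
    {H : Type*} [Ring H] [Algebra (LaurentPolynomial ℤ) H]
    (hk : HeckeAlgebra cs L H) where
  bar : H → H
  bar_add : ∀ a b : H, bar (a + b) = bar a + bar b
  bar_smul : ∀ (a : LaurentPolynomial ℤ) (h : H),
    bar (a • h) = (LaurentPolynomial.invert a) • bar h
  bar_mul : ∀ a b : H, bar (a * b) = bar a * bar b
  bar_T_mul : ∀ w : W, bar (hk.T w) * hk.T w⁻¹ = 1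
  T_mul_bar : ∀ w : W, hk.T w⁻¹ * bar (hk.T w) = 1

/-! The bar involution is unitriangular on the standard basis: `bar T_w ≡ T_w` modulo the span of
the `T_v` with `ℓ(v) < ℓ(w)`. Hence if `w` has maximal length in the support of `h`, the
`T_w`-coefficient of `bar h` is `bar` of the `T_w`-coefficient `c` of `h`. For `h ∈ H_{<0}` fixed
by `bar` this gives `c(q⁻¹) = c(q)` with `c ∈ q⁻¹ℤ[q⁻¹]`, which forces `c = 0`. -/

open LaurentPolynomial

theorem LaurentPolynomial.eq_zero_of_invert_eq_self {R : Type*} [CommSemiring R] {a : R[T;T⁻¹]}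
    (hneg : ∀ n : ℤ, 0 ≤ n → a.coeff n = 0) (hinv : invert a = a) : a = 0 := by
  ext n
  rcases le_or_gt 0 n with hn | hn
  · exact hneg n hn
  · rw [← hinv, invert_apply]
    exact hneg (-n) (by omega)

namespace HeckeAlgebra

variable {B W : Type*} [Group W] {M : CoxeterMatrix B} {cs : CoxeterSystem M W} {L : W → ℕ}
  {H : Type*} [Ring H] [Algebra (LaurentPolynomial ℤ) H] (hk : HeckeAlgebra cs L H)

theorem coeff_repr_eq_zero_of_mem_Hlt {h : H} (hmem : h ∈ hk.Hlt) (w : W) {n : ℤ} (hn : 0 ≤ n) :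
    (hk.T.repr h w).coeff n = 0 := by
  classical
  induction hmem using Submodule.span_induction with
  | mem x hx =>
    obtain ⟨v, m, hm, rfl⟩ := hx
    rw [map_smul, Module.Basis.repr_self, Finsupp.smul_apply, Finsupp.single_apply]
    split_ifs
    · rw [smul_eq_mul, mul_one, T_apply, if_neg (by omega)]
    · rw [smul_zero]; rfl
  | zero => rw [map_zero]; rfl
  | add x y _ _ hx hy =>
    rw [map_add, Finsupp.add_apply, AddMonoidAlgebra.coeff_add, Finsupp.add_apply, hx, hy,
      add_zero]
  | smul c x _ hx =>
    rw [map_zsmul, Finsupp.smul_apply, AddMonoidAlgebra.coeff_smul_apply, hx, smul_zero]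

noncomputable def spanLengthLT (n : ℕ) : Submodule (LaurentPolynomial ℤ) H :=
  Submodule.span _ (hk.T '' {v | cs.length v < n})

variable {hk}

theorem T_mem_spanLengthLT {n : ℕ} {v : W} (hv : cs.length v < n) : hk.T v ∈ hk.spanLengthLT n :=
  Submodule.subset_span ⟨v, hv, rfl⟩

theorem spanLengthLT_mono {m n : ℕ} (h : m ≤ n) : hk.spanLengthLT m ≤ hk.spanLengthLT n :=
  Submodule.span_mono (Set.image_mono fun _ hv => lt_of_lt_of_le hv h)

theorem repr_eq_zero_of_mem_spanLengthLT {n : ℕ} {x : H} (hx : x ∈ hk.spanLengthLT n) {w : W}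
    (hw : n ≤ cs.length w) : hk.T.repr x w = 0 := by
  induction hx using Submodule.span_induction with
  | mem x hx =>
    obtain ⟨v, hv, rfl⟩ := hx
    rw [Module.Basis.repr_self, Finsupp.single_eq_of_ne']
    rintro rfl
    exact absurd hv (not_lt.mpr hw)
  | zero => rw [map_zero]; rfl
  | add x y _ _ hx hy => rw [map_add, Finsupp.add_apply, hx, hy, add_zero]
  | smul c x _ hx => rw [map_smul, Finsupp.smul_apply, hx, smul_zero]

theorem T_simple_mul_mem_spanLengthLT (i : B) {n : ℕ} {x : H} (hx : x ∈ hk.spanLengthLT n) :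
    hk.T (cs.simple i) * x ∈ hk.spanLengthLT (n + 1) := by
  induction hx using Submodule.span_induction with
  | mem x hx =>
    obtain ⟨v, hv, rfl⟩ := hx
    have hv : cs.length v < n := hv
    rcases cs.length_simple_mul v i with hgt | hlt
    · rw [hk.T_mul_gt i v (by omega)]
      exact T_mem_spanLengthLT (by omega)
    · rw [hk.T_mul_lt i v (by omega)]
      exact add_mem (T_mem_spanLengthLT (by omega))
        (Submodule.smul_mem _ _ (T_mem_spanLengthLT (by omega)))
  | zero => rw [mul_zero]; exact zero_mem _
  | add x y _ _ hx hy => rw [mul_add]; exact add_mem hx hy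
  | smul c x _ hx => rw [mul_smul_comm]; exact Submodule.smul_mem _ _ hx

end HeckeAlgebra

namespace HeckeBar

variable {B W : Type*} [Group W] {M : CoxeterMatrix B} {cs : CoxeterSystem M W} {L : W → ℕ}
  {H : Type*} [Ring H] [Algebra (LaurentPolynomial ℤ) H] {hk : HeckeAlgebra cs L H}
  (bar : HeckeBar hk)

theorem bar_T_one : bar.bar (hk.T 1) = hk.T 1 := by
  simpa only [inv_one, hk.T_one, mul_one] using bar.bar_T_mul 1

theorem bar_T_simple (i : B) :
    bar.bar (hk.T (cs.simple i)) = hk.T (cs.simple i) - heckeXi (L (cs.simple i)) • 1 := by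
  set ξ := heckeXi (L (cs.simple i))
  have hlt : cs.length (cs.simple i * cs.simple i) < cs.length (cs.simple i) := by
    rw [cs.simple_mul_simple_self, cs.length_one, cs.length_simple]
    exact Nat.one_pos
  -- the quadratic relation `T_s² = 1 + ξ T_s` exhibits `T_s - ξ` as the inverse of `T_s`
  have hinv : hk.T (cs.simple i) * (hk.T (cs.simple i) - ξ • 1) = 1 := by
    rw [mul_sub, hk.T_mul_lt i _ hlt, cs.simple_mul_simple_self, hk.T_one, mul_smul_comm, mul_one,
      add_sub_cancel_right]
  have hbar : bar.bar (hk.T (cs.simple i)) * hk.T (cs.simple i) = 1 := by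
    simpa only [cs.inv_simple] using bar.bar_T_mul (cs.simple i)
  calc bar.bar (hk.T (cs.simple i))
      = bar.bar (hk.T (cs.simple i)) * (hk.T (cs.simple i) * (hk.T (cs.simple i) - ξ • 1)) := by
        rw [hinv, mul_one]
    _ = hk.T (cs.simple i) - ξ • 1 := by rw [← mul_assoc, hbar, one_mul]

theorem bar_T_sub_T_mem_spanLengthLT (w : W) :
    bar.bar (hk.T w) - hk.T w ∈ hk.spanLengthLT (cs.length w) := by
  induction hn : cs.length w generalizing w with
  | zero =>
    rw [cs.length_eq_zero_iff.mp hn, bar.bar_T_one, sub_self]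
    exact zero_mem _
  | succ n ih =>
    obtain ⟨i, hdesc⟩ := cs.exists_leftDescent_of_ne_one (w := w) (by
      rintro rfl; simp at hn)
    set u := cs.simple i * w
    have hu : cs.length u = n := by
      have : cs.length u + 1 = cs.length w := cs.isLeftDescent_iff.mp hdesc
      omega
    have hsu : cs.simple i * u = w := by rw [← mul_assoc, cs.simple_mul_simple_self, one_mul]
    have hTw : hk.T (cs.simple i) * hk.T u = hk.T w := by
      rw [hk.T_mul_gt i u (by rw [hsu]; omega), hsu]
    set r := bar.bar (hk.T u) - hk.T u
    have hr : r ∈ hk.spanLengthLT n := ih u hu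
    set ξ := heckeXi (L (cs.simple i))
    have expand : bar.bar (hk.T w) - hk.T w = hk.T (cs.simple i) * r - ξ • hk.T u - ξ • r := by
      rw [← hTw, bar.bar_mul, bar.bar_T_simple, ← sub_add_cancel (bar.bar (hk.T u)) (hk.T u),
        sub_mul, mul_add, smul_mul_assoc, one_mul, smul_add]
      abel
    rw [expand]
    exact sub_mem (sub_mem (HeckeAlgebra.T_simple_mul_mem_spanLengthLT i hr)
      (Submodule.smul_mem _ _ (HeckeAlgebra.T_mem_spanLengthLT (by omega))))
      (Submodule.smul_mem _ _ (HeckeAlgebra.spanLengthLT_mono (Nat.le_succ n) hr))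

theorem repr_bar_T_of_length_le {v w : W} (hvw : cs.length v ≤ cs.length w) :
    hk.T.repr (bar.bar (hk.T v)) w = Finsupp.single v 1 w := by
  rw [← add_sub_cancel (hk.T v) (bar.bar (hk.T v)), map_add, Finsupp.add_apply,
    Module.Basis.repr_self,
    HeckeAlgebra.repr_eq_zero_of_mem_spanLengthLT (bar.bar_T_sub_T_mem_spanLengthLT v) hvw,
    add_zero]

theorem bar_sum {ι : Type*} (s : Finset ι) (f : ι → H) :
    bar.bar (∑ i ∈ s, f i) = ∑ i ∈ s, bar.bar (f i) :=
  map_sum (AddMonoidHom.mk' bar.bar bar.bar_add) f s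

theorem repr_bar_of_length_maximal {h : H} {w : W}
    (hmax : ∀ v ∈ (hk.T.repr h).support, cs.length v ≤ cs.length w) :
    hk.T.repr (bar.bar h) w = invert (hk.T.repr h w) := by
  set c := hk.T.repr h
  calc hk.T.repr (bar.bar h) w
      = hk.T.repr (bar.bar (∑ v ∈ c.support, c v • hk.T v)) w := by
        conv_lhs => rw [← hk.T.linearCombination_repr h, Finsupp.linearCombination_apply]
        rfl
    _ = ∑ v ∈ c.support, invert (c v) * Finsupp.single v 1 w := by
        rw [bar.bar_sum, map_sum, Finsupp.finsetSum_apply]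
        refine Finset.sum_congr rfl fun v hv => ?_
        rw [bar.bar_smul, map_smul, Finsupp.smul_apply, smul_eq_mul,
          bar.repr_bar_T_of_length_le (hmax v hv)]
    _ = invert (c w) := by
        rw [Finset.sum_eq_single w (fun v _ hvw => by rw [Finsupp.single_eq_of_ne' hvw, mul_zero])
          (fun hw => by rw [Finsupp.notMem_support_iff.mp hw, map_zero, zero_mul]),
          Finsupp.single_eq_same, mul_one]

end HeckeBar

/-- If `h ∈ H_{<0}` is fixed by the bar involution, then `h = 0`. -/
theorem heckeAlgebra_bar_fixed_in_Hlt_eq_zero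
    {B W : Type*} [Group W] {M : CoxeterMatrix B} (cs : CoxeterSystem M W)
    (L : W → ℕ) (H : Type*) [Ring H] [Algebra (LaurentPolynomial ℤ) H]
    (hk : HeckeAlgebra cs L H) (bar : HeckeBar hk)
    (h : H) (hmem : h ∈ hk.Hlt) (hfix : bar.bar h = h) :
    h = 0 := by
  by_contra hne
  have hsupp : (hk.T.repr h).support.Nonempty := by simpa using hne
  obtain ⟨w, hw, hmax⟩ := (hk.T.repr h).support.exists_max_image cs.length hsupp
  have hinv : invert (hk.T.repr h w) = hk.T.repr h w := by
    rw [← bar.repr_bar_of_length_maximal hmax, hfix]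
  exact Finsupp.mem_support_iff.mp hw <|
    eq_zero_of_invert_eq_self (fun _ => hk.coeff_repr_eq_zero_of_mem_Hlt hmem w) hinv
end

section
/- Let W be a Weyl group with longest element w₀ and let W_e ⊇ W be a group containing it (e.g. an extended affine Weyl group with finite Weyl group W₀ and longest element w₀ of W₀). Define the Kazhdan–Lusztig two-sided preorder ≤_{LR}. Then for every z ∈ W_e there exists an element w in the set c₀ = {w | w = x·w₀·y with ℓ(w) = ℓ(x)+ℓ(w₀)+ℓ(y)} such that w ≤_{LR} z; consequently, if c₀ is a two-sided cell it is the lowest one: z ≤_{LR} w for w ∈ c₀ implies z ∈ c₀. -/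
/-- The Kazhdan–Lusztig two-sided preorder: `u ≤_{LR} w` is the reflexive
transitive closure of the relation `xwy ≤_{LR} w` whenever
`ℓ(xwy) = ℓ(x) + ℓ(w) + ℓ(y)`. -/
def LowestLRle {B W : Type*} [Group W] {M : CoxeterMatrix B}
    (cs : CoxeterSystem M W) (u w : W) : Prop :=
  Relation.ReflTransGen
    (fun p q => ∃ x y : W, p = x * q * y ∧
      cs.length p = cs.length x + cs.length q + cs.length y) u w

/-- The set `c₀` of elements of the form `x ∙ w₀ ∙ y` with lengths adding. -/
def LowestCell {B W : Type*} [Group W] {M : CoxeterMatrix B}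
    (cs : CoxeterSystem M W) (w₀ : W) : Set W :=
  {w | ∃ x y : W, w = x * w₀ * y ∧
    cs.length w = cs.length x + cs.length w₀ + cs.length y}

/-!
The second assertion is length bookkeeping: since length is subadditive, composing the
length-additive factorisations `p = x·q·y` and `q = a·w₀·b` gives the length-additive
factorisation `p = (xa)·w₀·(by)`.

For the first, let `P` be the standard parabolic subgroup generated by `S₀` and let `z₀ = zp` be
of minimal length in the coset `zP`. Then `ℓ(z₀x) = ℓ(z₀) + ℓ(x)` for `x ∈ P` and
`ℓ(pw₀) = ℓ(w₀) - ℓ(p)`, so `z₀w₀ = z·(pw₀)` is a length-additive product and lies in `c₀`.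
Both identities follow, by induction along `P`, from one fact: if `s` is not a right descent of
`u`, then `s` is a right descent of `wu` iff `usu⁻¹` is a right inversion of `w`. This is read
off Tits' reflection cocycle `η(w, t) ∈ ℤ/2`, obtained by letting each simple reflection act on
`W × ℤ/2` by `(x, ε) ↦ (sxs, ε + [x = s])`; it satisfies `η(uv, t) = η(v, t) + η(u, vtv⁻¹)` and,
for a reflection `t`, `η(w, t) = 1 ↔ ℓ(wt) < ℓ(w)`.
-/

section ConjShift

variable {G : Type*} [Group G]

lemma conj_eq_iff_eq_inv_conj (g x y : G) : g * x * g⁻¹ = y ↔ x = g⁻¹ * y * g := by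
  constructor <;> rintro rfl <;> group

variable [DecidableEq G]

def conjShiftPerm (a : G) : Equiv.Perm (G × ZMod 2) where
  toFun p := (a * p.1 * a⁻¹, p.2 + if p.1 = a then 1 else 0)
  invFun p := (a⁻¹ * p.1 * a, p.2 + if p.1 = a then 1 else 0)
  left_inv := by
    rintro ⟨x, ε⟩
    have hx : a * x * a⁻¹ = a ↔ x = a := by rw [conj_eq_iff_eq_inv_conj]; group
    refine Prod.ext (by group) ?_
    dsimp only
    rw [if_congr hx rfl rfl, CharTwo.add_cancel_right]
  right_inv := by
    rintro ⟨x, ε⟩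
    have hx : a⁻¹ * x * a = a ↔ x = a := by
      simpa using conj_eq_iff_eq_inv_conj a⁻¹ x a
    refine Prod.ext (by group) ?_
    dsimp only
    rw [if_congr hx rfl rfl, CharTwo.add_cancel_right]

@[simp] lemma conjShiftPerm_apply (a x : G) (ε : ZMod 2) :
    conjShiftPerm a (x, ε) = (a * x * a⁻¹, ε + if x = a then 1 else 0) := rfl

lemma conjShiftPerm_mul_pow_apply {a b : G} (ha : a * a = 1) (hb : b * b = 1) (r : ℕ)
    (x : G) (ε : ZMod 2) :
    ((conjShiftPerm a * conjShiftPerm b) ^ r) (x, ε) =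
      ((a * b) ^ r * x * ((a * b) ^ r)⁻¹,
        ε + ∑ n ∈ Finset.range (2 * r), if x = (b * a) ^ n * b then 1 else 0) := by
  induction r with
  | zero => simp
  | succ r ih =>
    have hinv : (a * b)⁻¹ = b * a := by
      rw [mul_inv_rev, inv_eq_of_mul_eq_one_right ha, inv_eq_of_mul_eq_one_right hb]
    have hcomm : b * (a * b) ^ r = (b * a) ^ r * b :=
      (SemiconjBy.pow_right (show SemiconjBy b (a * b) (b * a) by
        simp [SemiconjBy, mul_assoc]) r).eq
    have cond₁ : (a * b) ^ r * x * ((a * b) ^ r)⁻¹ = b ↔ x = (b * a) ^ (2 * r) * b := by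
      rw [conj_eq_iff_eq_inv_conj, ← inv_pow, hinv, mul_assoc, hcomm, ← mul_assoc, ← pow_add,
        two_mul]
    have cond₂ : b * ((a * b) ^ r * x * ((a * b) ^ r)⁻¹) * b⁻¹ = a ↔
        x = (b * a) ^ (2 * r + 1) * b := by
      rw [conj_eq_iff_eq_inv_conj, conj_eq_iff_eq_inv_conj, inv_eq_of_mul_eq_one_right hb,
        ← inv_pow, hinv]
      have : (b * a) ^ r * (b * a * b) * (a * b) ^ r = (b * a) ^ (2 * r + 1) * b := by
        calc (b * a) ^ r * (b * a * b) * (a * b) ^ r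
            = (b * a) ^ r * (b * a) * (b * (a * b) ^ r) := by simp only [mul_assoc]
          _ = (b * a) ^ (2 * r + 1) * b := by
            rw [hcomm, ← pow_succ, ← mul_assoc, ← pow_add, show r + 1 + r = 2 * r + 1 by ring]
      rw [this]
    rw [pow_succ', Equiv.Perm.mul_apply, ih, Equiv.Perm.mul_apply, conjShiftPerm_apply,
      conjShiftPerm_apply]
    simp only [cond₁, cond₂]
    rw [show 2 * (r + 1) = 2 * r + 1 + 1 by ring, Finset.sum_range_succ, Finset.sum_range_succ]
    refine Prod.ext ?_ ?_
    · simp only [pow_succ', mul_inv_rev, mul_assoc]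
    · simp only [add_assoc]

lemma conjShiftPerm_mul_pow_eq_one {a b : G} (ha : a * a = 1) (hb : b * b = 1) {m : ℕ}
    (hm : (a * b) ^ m = 1) : (conjShiftPerm a * conjShiftPerm b) ^ m = 1 := by
  have hm' : (b * a) ^ m = 1 := by
    rw [← inv_eq_one, ← inv_pow, mul_inv_rev, inv_eq_of_mul_eq_one_right ha,
      inv_eq_of_mul_eq_one_right hb, hm]
  ext ⟨x, ε⟩ : 1
  -- the summands are `m`-periodic in `n`, so the sum over `n < 2m` counts everything twice
  rw [conjShiftPerm_mul_pow_apply ha hb, hm, two_mul, Finset.sum_range_add]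
  simp only [pow_add, hm', one_mul, inv_one, mul_one, CharTwo.add_self_eq_zero, add_zero,
    Equiv.Perm.one_apply]

end ConjShift

lemma ZMod.eq_zero_of_ne_one {x : ZMod 2} (h : x ≠ 1) : x = 0 := by
  revert x
  decide

namespace CoxeterSystem

variable {B W : Type*} [Group W] {M : CoxeterMatrix B} (cs : CoxeterSystem M W)

local prefix:100 "s" => cs.simple
local prefix:100 "π" => cs.wordProd
local prefix:100 "ℓ" => cs.length
local prefix:100 "ris " => cs.rightInvSeq

section ReflectionCocycle

variable [DecidableEq W]

def reflectionRep : W →* Equiv.Perm (W × ZMod 2) :=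
  cs.lift ⟨fun i => conjShiftPerm (s i), fun i j =>
    conjShiftPerm_mul_pow_eq_one (cs.simple_mul_simple_self i) (cs.simple_mul_simple_self j)
      (cs.simple_mul_simple_pow i j)⟩

def reflectionCocycle (w t : W) : ZMod 2 := (cs.reflectionRep w (t, 0)).2

lemma reflectionRep_simple (i : B) : cs.reflectionRep (s i) = conjShiftPerm (s i) :=
  cs.lift_apply_simple _ i

lemma reflectionRep_apply (w x : W) (ε : ZMod 2) :
    cs.reflectionRep w (x, ε) = (w * x * w⁻¹, ε + cs.reflectionCocycle w x) := by
  induction w using cs.simple_induction_left generalizing ε with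
  | one => simp [reflectionCocycle]
  | mul_simple_left w i ih =>
    have h : ∀ δ, cs.reflectionRep (s i * w) (x, δ) =
        (s i * w * x * (s i * w)⁻¹,
          δ + cs.reflectionCocycle w x + if w * x * w⁻¹ = s i then 1 else 0) := by
      intro δ
      rw [map_mul, Equiv.Perm.mul_apply, ih, reflectionRep_simple, conjShiftPerm_apply]
      simp only [mul_inv_rev, mul_assoc, add_assoc]
    rw [reflectionCocycle, h, h, zero_add, add_assoc]

lemma reflectionCocycle_mul (u v t : W) :
    cs.reflectionCocycle (u * v) t =
      cs.reflectionCocycle v t + cs.reflectionCocycle u (v * t * v⁻¹) := by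
  rw [reflectionCocycle, map_mul, Equiv.Perm.mul_apply, reflectionRep_apply cs v t 0, zero_add,
    reflectionRep_apply]

@[simp] lemma reflectionCocycle_one (t : W) : cs.reflectionCocycle 1 t = 0 := by
  simp [reflectionCocycle]

lemma reflectionCocycle_simple (i : B) (t : W) :
    cs.reflectionCocycle (s i) t = if t = s i then 1 else 0 := by
  rw [reflectionCocycle, reflectionRep_simple, conjShiftPerm_apply, zero_add]

lemma reflectionCocycle_wordProd (ω : List B) (t : W) :
    cs.reflectionCocycle (π ω) t = ((ris ω).count t : ZMod 2) := by
  induction ω with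
  | nil => simp
  | cons i ω ih =>
    rw [wordProd_cons, reflectionCocycle_mul, ih, reflectionCocycle_simple, rightInvSeq,
      List.count_cons]
    simp only [conj_eq_iff_eq_inv_conj, beq_iff_eq, eq_comm (a := t)]
    push_cast
    rfl

lemma isRightInversion_of_reflectionCocycle_eq_one {w t : W}
    (h : cs.reflectionCocycle w t = 1) : cs.IsRightInversion w t := by
  obtain ⟨ω, hω, rfl⟩ := cs.exists_isReduced w
  refine cs.isRightInversion_of_mem_rightInvSeq hω (List.count_pos_iff.mp (Nat.pos_of_ne_zero ?_))
  intro h0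
  rw [reflectionCocycle_wordProd, h0, Nat.cast_zero] at h
  exact zero_ne_one h

lemma reflectionCocycle_self {t : W} (ht : cs.IsReflection t) : cs.reflectionCocycle t t = 1 := by
  obtain ⟨w, i, rfl⟩ := ht
  have hconj : w⁻¹ * (w * s i * w⁻¹) * w = s i := by group
  have h₁ := cs.reflectionCocycle_mul (w * s i) w⁻¹ (w * s i * w⁻¹)
  have h₂ := cs.reflectionCocycle_mul w (s i) (s i)
  have h₃ := cs.reflectionCocycle_mul w w⁻¹ (w * s i * w⁻¹)
  simp only [inv_inv, hconj, mul_inv_cancel_right, mul_inv_cancel, reflectionCocycle_one,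
    reflectionCocycle_simple, if_pos] at h₁ h₂ h₃
  linear_combination h₁ + h₂ - h₃

lemma reflectionCocycle_eq_one_iff {w t : W} (ht : cs.IsReflection t) :
    cs.reflectionCocycle w t = 1 ↔ cs.IsRightInversion w t := by
  refine ⟨cs.isRightInversion_of_reflectionCocycle_eq_one, fun h => ?_⟩
  have hwt : cs.reflectionCocycle (w * t) t = 0 := ZMod.eq_zero_of_ne_one fun h' =>
    ht.isRightInversion_mul_left_iff.mp (cs.isRightInversion_of_reflectionCocycle_eq_one h') h
  have := cs.reflectionCocycle_mul (w * t) t t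
  rwa [mul_inv_cancel_right, mul_assoc, ht.mul_self, mul_one, hwt, reflectionCocycle_self cs ht,
    add_zero] at this

lemma reflectionCocycle_eq_zero_iff {w t : W} (ht : cs.IsReflection t) :
    cs.reflectionCocycle w t = 0 ↔ ¬cs.IsRightInversion w t := by
  rw [← reflectionCocycle_eq_one_iff cs ht]
  exact ⟨fun h h₁ => zero_ne_one (h.symm.trans h₁), ZMod.eq_zero_of_ne_one⟩

end ReflectionCocycle

lemma isRightDescent_mul_iff {u : W} {i : B} (hu : ¬cs.IsRightDescent u i) (w : W) :
    cs.IsRightDescent (w * u) i ↔ cs.IsRightInversion w (u * s i * u⁻¹) := by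
  classical
  have hs := cs.isReflection_simple i
  rw [← isRightInversion_simple_iff_isRightDescent] at hu ⊢
  rw [← reflectionCocycle_eq_one_iff cs hs, ← reflectionCocycle_eq_one_iff cs (hs.conj u),
    reflectionCocycle_mul, (reflectionCocycle_eq_zero_iff cs hs).mpr hu, zero_add]

lemma length_mul_mul_le (x y z : W) : ℓ (x * y * z) ≤ ℓ x + ℓ y + ℓ z :=
  (cs.length_mul_le _ z).trans (Nat.add_le_add_right (cs.length_mul_le x y) _)

lemma exists_forall_length_le_mul (H : Subgroup W) (z : W) :
    ∃ p ∈ H, ∀ q ∈ H, ℓ (z * p) ≤ ℓ (z * p * q) := by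
  obtain ⟨p, hp, hmin⟩ := (InvImage.wf (fun p => ℓ (z * p)) wellFounded_lt).has_min (H : Set W)
    ⟨1, H.one_mem⟩
  refine ⟨p, hp, fun q hq => ?_⟩
  rw [mul_assoc]
  exact not_lt.mp (hmin (p * q) (H.mul_mem hp hq))

lemma isRightInversion_of_forall_length_le {H : Subgroup W} {w₀ t : W} (hw₀ : w₀ ∈ H)
    (hmax : ∀ u ∈ H, ℓ u ≤ ℓ w₀) (ht : cs.IsReflection t) (htH : t ∈ H) :
    cs.IsRightInversion w₀ t :=
  ⟨ht, (hmax _ (H.mul_mem hw₀ htH)).lt_of_ne (ht.length_mul_left_ne w₀)⟩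

section Parabolic

variable {S₀ : Set B}

lemma closure_simple_induction {motive : W → Prop} (one : motive 1)
    (mul_simple : ∀ x ∈ Subgroup.closure (cs.simple '' S₀), ∀ i ∈ S₀,
      ¬cs.IsRightDescent x i → (motive (x * s i) ↔ motive x))
    {x : W} (hx : x ∈ Subgroup.closure (cs.simple '' S₀)) : motive x := by
  have step : ∀ x ∈ Subgroup.closure (cs.simple '' S₀), ∀ i ∈ S₀, motive x → motive (x * s i) := by
    intro x hx i hi h
    by_cases hxi : cs.IsRightDescent x i
    · have hxs : x * s i ∈ Subgroup.closure (cs.simple '' S₀) :=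
        mul_mem hx (Subgroup.subset_closure ⟨i, hi, rfl⟩)
      refine (mul_simple _ hxs i hi (cs.isRightDescent_iff_not_isRightDescent_mul.mp hxi)).mp ?_
      rwa [simple_mul_simple_cancel_right]
    · exact (mul_simple x hx i hi hxi).mpr h
  induction hx using Subgroup.closure_induction_right with
  | one => exact one
  | mul_right x hx _ hy ih =>
    obtain ⟨i, hi, rfl⟩ := hy
    exact step x hx i hi ih
  | mul_inv_cancel x hx _ hy ih =>
    obtain ⟨i, hi, rfl⟩ := hy
    rw [inv_simple]
    exact step x hx i hi ih

lemma length_mul_add_length_of_forall_length_le {w₀ x : W}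
    (hw₀ : w₀ ∈ Subgroup.closure (cs.simple '' S₀))
    (hmax : ∀ u ∈ Subgroup.closure (cs.simple '' S₀), ℓ u ≤ ℓ w₀)
    (hx : x ∈ Subgroup.closure (cs.simple '' S₀)) : ℓ (w₀ * x) + ℓ x = ℓ w₀ := by
  refine cs.closure_simple_induction (motive := fun x => ℓ (w₀ * x) + ℓ x = ℓ w₀) (by simp)
    (fun x hx i hi hxi => ?_) hx
  have hdesc : cs.IsRightDescent (w₀ * x) i :=
    (cs.isRightDescent_mul_iff hxi w₀).mpr <| cs.isRightInversion_of_forall_length_le hw₀ hmax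
      ((cs.isReflection_simple i).conj x)
      (mul_mem (mul_mem hx (Subgroup.subset_closure ⟨i, hi, rfl⟩)) (inv_mem hx))
  rw [IsRightDescent] at hxi hdesc
  rw [← mul_assoc]
  have := cs.length_mul_simple x i
  have := cs.length_mul_simple (w₀ * x) i
  omega

lemma length_mul_of_forall_length_le_mul {y x : W}
    (hmin : ∀ q ∈ Subgroup.closure (cs.simple '' S₀), ℓ y ≤ ℓ (y * q))
    (hx : x ∈ Subgroup.closure (cs.simple '' S₀)) : ℓ (y * x) = ℓ y + ℓ x := by
  refine cs.closure_simple_induction (motive := fun x => ℓ (y * x) = ℓ y + ℓ x) (by simp)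
    (fun x hx i hi hxi => ?_) hx
  have hyx : ¬cs.IsRightDescent (y * x) i := fun h =>
    (((cs.isRightDescent_mul_iff hxi y).mp h).2).not_ge <| hmin _
      (mul_mem (mul_mem hx (Subgroup.subset_closure ⟨i, hi, rfl⟩)) (inv_mem hx))
  rw [IsRightDescent] at hxi hyx
  rw [← mul_assoc]
  have := cs.length_mul_simple x i
  have := cs.length_mul_simple (y * x) i
  omega

end Parabolic

end CoxeterSystem

section LowestCell

variable {B W : Type*} [Group W] {M : CoxeterMatrix B} (cs : CoxeterSystem M W)

lemma mem_lowestCell_of_eq_mul_mul {w₀ p q x y : W} (hq : q ∈ LowestCell cs w₀)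
    (hp : p = x * q * y) (hlen : cs.length p = cs.length x + cs.length q + cs.length y) :
    p ∈ LowestCell cs w₀ := by
  obtain ⟨a, b, rfl, hqlen⟩ := hq
  refine ⟨x * a, b * y, by rw [hp]; group, le_antisymm ?_ ?_⟩
  · rw [hp, show x * (a * w₀ * b) * y = x * a * w₀ * (b * y) by group]
    exact cs.length_mul_mul_le _ _ _
  · have := cs.length_mul_le x a
    have := cs.length_mul_le b y
    omega

lemma mem_lowestCell_of_lowestLRle {w₀ z w : W} (hzw : LowestLRle cs z w)
    (hw : w ∈ LowestCell cs w₀) : z ∈ LowestCell cs w₀ := by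
  induction hzw using Relation.ReflTransGen.head_induction_on with
  | refl => exact hw
  | head hstep _ ih =>
    obtain ⟨x, y, hp, hlen⟩ := hstep
    exact mem_lowestCell_of_eq_mul_mul cs ih hp hlen

end LowestCell

theorem lowest_two_sided_cell_general
    {B W : Type*} [Group W] {M : CoxeterMatrix B} (cs : CoxeterSystem M W)
    (S₀ : Set B)
    (w₀ : W) (hw₀ : w₀ ∈ Subgroup.closure (cs.simple '' S₀))
    (hmax : ∀ u ∈ Subgroup.closure (cs.simple '' S₀), cs.length u ≤ cs.length w₀) :
    (∀ z : W, ∃ w ∈ LowestCell cs w₀, LowestLRle cs w z) ∧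
      (∀ z w : W, w ∈ LowestCell cs w₀ → LowestLRle cs z w →
        z ∈ LowestCell cs w₀) := by
  refine ⟨fun z => ?_, fun z w hw hzw => mem_lowestCell_of_lowestLRle cs hzw hw⟩
  obtain ⟨p, hp, hmin⟩ := cs.exists_forall_length_le_mul (Subgroup.closure (cs.simple '' S₀)) z
  have hz₀ : ∀ x ∈ Subgroup.closure (cs.simple '' S₀),
      cs.length (z * p * x) = cs.length (z * p) + cs.length x :=
    fun x hx => cs.length_mul_of_forall_length_le_mul hmin hx
  have hz : cs.length z = cs.length (z * p) + cs.length p := by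
    simpa using hz₀ p⁻¹ (inv_mem hp)
  have hpw₀ : cs.length (p * w₀) + cs.length p = cs.length w₀ := by
    simpa [← cs.length_inv (p * w₀)] using cs.length_mul_add_length_of_forall_length_le
      (inv_mem hw₀) (by simpa using hmax) (inv_mem hp)
  refine ⟨z * p * w₀, ⟨z * p, 1, (mul_one _).symm, by simp [hz₀ w₀ hw₀]⟩,
    .single ⟨1, p * w₀, by group, ?_⟩⟩
  rw [hz₀ w₀ hw₀, cs.length_one]
  omega

/-- Let `W₀` be a finite standard parabolic subgroup with longest element `w₀`.
Every element of the group dominates (for `≤_{LR}`) an element of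
`c₀ = {x ∙ w₀ ∙ y}`; consequently `c₀` is the lowest two-sided cell: anything
`≤_{LR}` an element of `c₀` lies in `c₀`. -/
theorem lowest_two_sided_cell
    {B W : Type*} [Group W] {M : CoxeterMatrix B} (cs : CoxeterSystem M W)
    (S₀ : Set B)
    (hfin : (Subgroup.closure (cs.simple '' S₀) : Set W).Finite)
    (w₀ : W) (hw₀ : w₀ ∈ Subgroup.closure (cs.simple '' S₀))
    (hmax : ∀ u ∈ Subgroup.closure (cs.simple '' S₀), cs.length u ≤ cs.length w₀) :
    (∀ z : W, ∃ w ∈ LowestCell cs w₀, LowestLRle cs w z) ∧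
      (∀ z w : W, w ∈ LowestCell cs w₀ → LowestLRle cs z w →
        z ∈ LowestCell cs w₀) :=
  lowest_two_sided_cell_general cs S₀ w₀ hw₀ hmax
end
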